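/- For every integer m ≥ 4 and every coloring Δ: [1, 7m + ⌈m/2⌉ - 6] → {1,2,3}, there exist monochromatic m-sets X ≺ Y with 2(x_m - x_1) ≤ y_m - x_1. -/

import Mathlib

/-- `x` is a monochromatic m-set (indexed 1..m) inside `S` under coloring `Δ`. -/
def IsMonoMSet (m : ℕ) (Δ : ℕ → ℕ) (S : Finset ℕ) (x : ℕ → ℕ) : Prop :=
  (∀ i j, 1 ≤ i → i < j → j ≤ m → x i < x j) ∧
  (∀ i, 1 ≤ i → i ≤ m → x i ∈ S) ∧
  (∀ i, 1 ≤ i → i ≤ m → Δ (x i) = Δ (x 1))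

/-- There exist monochromatic m-sets X ≺ Y in `S` with 2(x_m - x_1) ≤ y_m - x_1. -/
def HasGoodPair (m : ℕ) (Δ : ℕ → ℕ) (S : Finset ℕ) : Prop :=
  ∃ x y : ℕ → ℕ, IsMonoMSet m Δ S x ∧ IsMonoMSet m Δ S y ∧
    x m < y 1 ∧ 2 * (x m - x 1) ≤ y m - x 1

/-- `g m r` : least N such that every r-coloring of [1,N] has a good pair. -/
noncomputable def g (m r : ℕ) : ℕ :=
  sInf {N | ∀ Δ : ℕ → ℕ, (∀ z ∈ Finset.Icc 1 N, Δ z ∈ Finset.Icc 1 r) →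
    HasGoodPair m Δ (Finset.Icc 1 N)}

/-!
Assume there is no good pair. Pigeonhole on `[1, 3m-2]` gives a monochromatic m-set `X` with
`x_m ≤ 3m-2`. If a colour has `m` points beyond `x_m`, its last `m` points form a `Y` with
`X ≺ Y`, so that colour avoids `[2x_m - x_1, N]`; since this interval has at least `m` points,
exactly one colour `γ` has `m` points beyond `x_m`. The two other colours have fewer, which leaves
at least `2m` points `Γ` of colour `γ` there. With `t` the `m`-th point of `Γ` and `q` its last,
comparing the first and the last `m` points of `Γ` gives `q + min Γ < 2t`, while
`(x_m, t) ∪ (q, N]` holds fewer than `m` points of each colour. Together with `q + x_1 < 2x_m`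
this forces `2N < 15m - 12`.
-/

open Finset

namespace IsMonoMSet

variable {m : ℕ} {Δ : ℕ → ℕ} {S T : Finset ℕ} {x : ℕ → ℕ}

theorem mono (hx : IsMonoMSet m Δ S x) (hST : S ⊆ T) : IsMonoMSet m Δ T x :=
  ⟨hx.1, fun i hi him => hST (hx.2.1 i hi him), hx.2.2⟩

theorem first_le_last (hx : IsMonoMSet m Δ S x) (hm : 0 < m) : x 1 ≤ x m := by
  rcases Nat.lt_or_eq_of_le hm with h | h
  · exact (hx.1 1 m le_rfl h le_rfl).le
  · subst h; rfl

end IsMonoMSet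

theorem Finset.exists_mem_card_filter_le_eq {α : Type*} [LinearOrder α] (s : Finset α) {k : ℕ}
    (hk0 : 0 < k) (hk : k ≤ #s) : ∃ t ∈ s, #{z ∈ s | z ≤ t} = k := by
  induction s using Finset.induction_on_max with
  | empty => rw [card_empty] at hk; omega
  | insert a s ha ih =>
    have has : a ∉ s := fun h => lt_irrefl a (ha a h)
    rw [card_insert_of_notMem has] at hk
    rcases hk.lt_or_eq with hk | hk
    · obtain ⟨t, hts, ht⟩ := ih (by omega)
      refine ⟨t, mem_insert_of_mem hts, ?_⟩
      rw [filter_insert, if_neg (not_le.2 (ha t hts)), ht]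
    · refine ⟨a, mem_insert_self a s, ?_⟩
      rw [filter_true_of_mem fun z hz => ?_, card_insert_of_notMem has, hk]
      rcases mem_insert.1 hz with rfl | hz
      exacts [le_rfl, (ha z hz).le]

theorem Finset.card_le_card_fiber_add_mul {α β : Type*} [DecidableEq β] {f : α → β}
    {s : Finset α} {t : Finset β} {b : β} {n : ℕ} (hb : b ∈ t) (hf : ∀ a ∈ s, f a ∈ t)
    (hn : ∀ c ∈ t, c ≠ b → #{a ∈ s | f a = c} ≤ n) :
    #s ≤ #{a ∈ s | f a = b} + (#t - 1) * n := by
  rw [card_eq_sum_card_fiberwise hf, ← add_sum_erase t _ hb, ← card_erase_of_mem hb]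
  gcongr
  simpa using sum_le_card_nsmul _ _ n fun c hc => hn c (mem_of_mem_erase hc) (ne_of_mem_erase hc)

theorem Ioc_subset_Icc_one (a b : ℕ) : Ioc a b ⊆ Icc 1 b := fun z hz => by
  simp only [mem_Ioc, mem_Icc] at hz ⊢
  omega

section MonoSets

variable {m c : ℕ} {Δ : ℕ → ℕ} {S A : Finset ℕ} {x : ℕ → ℕ}

theorem exists_isMonoMSet_of_card_eq (hm : 0 < m) (hA : #A = m) (hc : ∀ z ∈ A, Δ z = c) :
    ∃ x, IsMonoMSet m Δ A x ∧ ∀ z ∈ A, x 1 ≤ z ∧ z ≤ x m := by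
  set e := A.orderEmbOfFin hA
  refine ⟨fun i => e ⟨min (i - 1) (m - 1), by omega⟩,
    ⟨fun i j hi hij hj => e.strictMono (Fin.mk_lt_mk.2 (by omega)),
      fun i _ _ => orderEmbOfFin_mem A hA _,
      fun i _ _ => by rw [hc _ (orderEmbOfFin_mem A hA _), hc _ (orderEmbOfFin_mem A hA _)]⟩,
    fun z hz => ?_⟩
  obtain ⟨j, rfl⟩ : z ∈ Set.range e := by rwa [range_orderEmbOfFin]
  exact ⟨e.monotone (Fin.mk_le_mk.2 (by omega)), e.monotone (Fin.mk_le_mk.2 (by omega))⟩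

theorem exists_isMonoMSet_of_le_card (hm : 0 < m) (hA : m ≤ #A) (hc : ∀ z ∈ A, Δ z = c)
    {z : ℕ} (hz : z ∈ A) : ∃ y, IsMonoMSet m Δ A y ∧ z ≤ y m := by
  obtain ⟨B, hzB, hBA, hB⟩ :=
    exists_subsuperset_card_eq (singleton_subset_iff.2 hz) (by rwa [card_singleton]) hA
  obtain ⟨y, hy, hyB⟩ := exists_isMonoMSet_of_card_eq hm hB fun z hz => hc z (hBA hz)
  exact ⟨y, hy.mono hBA, (hyB z (singleton_subset_iff.1 hzB)).2⟩

theorem exists_isMonoMSet_of_mul_lt_card {t : Finset ℕ} (hm : 0 < m)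
    (hΔ : ∀ z ∈ S, Δ z ∈ t) (hS : #t * (m - 1) < #S) : ∃ x, IsMonoMSet m Δ S x := by
  obtain ⟨c, -, hc⟩ := exists_lt_card_fiber_of_mul_lt_card_of_maps_to hΔ hS
  obtain ⟨z, hz⟩ := card_pos.1 (by omega : 0 < #{z ∈ S | Δ z = c})
  obtain ⟨x, hx, -⟩ :=
    exists_isMonoMSet_of_le_card hm (by omega) (fun z hz => (mem_filter.1 hz).2) hz
  exact ⟨x, hx.mono (filter_subset _ _)⟩

theorem add_lt_of_not_hasGoodPair (hn : ¬ HasGoodPair m Δ S) (hx : IsMonoMSet m Δ S x)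
    (hm : 0 < m) (hAS : A ⊆ S) (hA : m ≤ #A) (hc : ∀ z ∈ A, Δ z = c)
    (hxA : ∀ z ∈ A, x m < z) {z : ℕ} (hz : z ∈ A) : z + x 1 < 2 * x m := by
  obtain ⟨y, hy, hzy⟩ := exists_isMonoMSet_of_le_card hm hA hc hz
  have hxy : x m < y 1 := hxA _ (hy.2.1 1 le_rfl hm)
  have hbad : ¬ 2 * (x m - x 1) ≤ y m - x 1 := fun h => hn ⟨x, y, hx, hy.mono hAS, hxy, h⟩
  have := hx.first_le_last hm
  have := hxA z hz
  omega

theorem exists_add_lt_two_mul_of_not_hasGoodPair {Γ : Finset ℕ} (hn : ¬ HasGoodPair m Δ S)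
    (hm : 0 < m) (hΓS : Γ ⊆ S) (hc : ∀ z ∈ Γ, Δ z = c) (hΓ : 2 * m ≤ #Γ) :
    ∃ a ∈ Γ, ∃ t ∈ Γ, ∃ q ∈ Γ,
      (∀ z ∈ Γ, z ≤ q) ∧ #{z ∈ Γ | z < t} < m ∧ t < q ∧ q + a < 2 * t := by
  obtain ⟨t, htΓ, hL⟩ := Γ.exists_mem_card_filter_le_eq (k := m) hm (by omega)
  have htL : t ∈ {z ∈ Γ | z ≤ t} := mem_filter.2 ⟨htΓ, le_rfl⟩
  obtain ⟨y, hy, hyL⟩ := exists_isMonoMSet_of_card_eq hm hL fun z hz => hc z (mem_filter.1 hz).1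
  have hym : y m = t := le_antisymm (mem_filter.1 (hy.2.1 m hm le_rfl)).2 (hyL t htL).2
  have hU : m ≤ #{z ∈ Γ | ¬ z ≤ t} := by
    have := card_filter_add_card_filter_not (s := Γ) (· ≤ t)
    omega
  obtain ⟨u, hu⟩ := card_pos.1 (by omega : 0 < #{z ∈ Γ | ¬ z ≤ t})
  obtain ⟨q, hqΓ, hq⟩ := Γ.exists_max_image id ⟨t, htΓ⟩
  have htq : t < q := (not_le.1 (mem_filter.1 hu).2).trans_le (hq u (mem_filter.1 hu).1)
  have hqU : q ∈ {z ∈ Γ | ¬ z ≤ t} := mem_filter.2 ⟨hqΓ, htq.not_ge⟩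
  have hqy := add_lt_of_not_hasGoodPair hn (hy.mono ((filter_subset _ _).trans hΓS)) hm
    ((filter_subset _ _).trans hΓS) hU (fun z hz => hc z (mem_filter.1 hz).1)
    (fun z hz => hym ▸ not_le.1 (mem_filter.1 hz).2) hqU
  refine ⟨y 1, (mem_filter.1 (hy.2.1 1 le_rfl hm)).1, t, htΓ, q, hqΓ, hq, ?_, htq,
    hym ▸ hqy⟩
  calc #{z ∈ Γ | z < t} ≤ #({z ∈ Γ | z ≤ t}.erase t) :=
        card_le_card fun z hz => by
          simp only [mem_erase, mem_filter] at hz ⊢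
          exact ⟨hz.2.ne, hz.1, hz.2.le⟩
    _ < m := by rw [card_erase_of_mem htL, hL]; omega

end MonoSets

section ThreeColors

variable {m N : ℕ} {Δ : ℕ → ℕ} {x : ℕ → ℕ}

theorem add_lt_of_le_card (hn : ¬ HasGoodPair m Δ (Icc 1 N)) (hx : IsMonoMSet m Δ (Icc 1 N) x)
    (hm : 0 < m) {c z : ℕ} (hc : m ≤ #{w ∈ Ioc (x m) N | Δ w = c}) (hz : z ∈ Ioc (x m) N)
    (hzc : Δ z = c) : z + x 1 < 2 * x m :=
  add_lt_of_not_hasGoodPair hn hx hm ((filter_subset _ _).trans (Ioc_subset_Icc_one _ _)) hc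
    (fun _ hw => (mem_filter.1 hw).2) (fun _ hw => (mem_Ioc.1 (mem_filter.1 hw).1).1)
    (mem_filter.2 ⟨hz, hzc⟩)

theorem eq_of_le_card_of_le_card (hΔ : ∀ z ∈ Icc 1 N, Δ z ∈ Icc 1 3)
    (hn : ¬ HasGoodPair m Δ (Icc 1 N)) (hx : IsMonoMSet m Δ (Icc 1 N) x) (hm : 2 ≤ m)
    (hN : 2 * x m + m ≤ N + x 1 + 1) {γ c : ℕ} (hγ : γ ∈ Icc 1 3) (hc : c ∈ Icc 1 3)
    (hγm : m ≤ #{z ∈ Ioc (x m) N | Δ z = γ}) (hcm : m ≤ #{z ∈ Ioc (x m) N | Δ z = c}) :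
    γ = c := by
  by_contra hne
  set I := Icc (2 * x m - x 1) N
  have hx1m : x 1 < x m := hx.1 1 m le_rfl (by omega) le_rfl
  have hI : I ⊆ Ioc (x m) N := fun z hz => by simp only [I, mem_Icc, mem_Ioc] at hz ⊢; omega
  have hfree : ∀ d, m ≤ #{z ∈ Ioc (x m) N | Δ z = d} → ∀ z ∈ I, Δ z ≠ d := by
    intro d hd z hz hzd
    have := add_lt_of_le_card hn hx (by omega) hd (hI hz) hzd
    have := mem_Icc.1 hz
    omega
  have hIcol : ∀ z ∈ I, Δ z ∈ ((Icc 1 3).erase γ).erase c := fun z hz =>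
    mem_erase.2 ⟨hfree c hcm z hz, mem_erase.2 ⟨hfree γ hγm z hz,
      hΔ z (Ioc_subset_Icc_one _ _ (hI hz))⟩⟩
  obtain ⟨d, -, hd⟩ := exists_lt_card_fiber_of_mul_lt_card_of_maps_to hIcol (n := m - 1) (by
    rw [card_erase_of_mem (mem_erase.2 ⟨Ne.symm hne, hc⟩), card_erase_of_mem hγ, Nat.card_Icc,
      Nat.card_Icc]
    omega)
  obtain ⟨z, hz⟩ := card_pos.1 (by omega : 0 < #{z ∈ I | Δ z = d})
  have hdm : m ≤ #{z ∈ Ioc (x m) N | Δ z = d} :=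
    (by omega : m ≤ #{z ∈ I | Δ z = d}).trans (card_le_card (filter_subset_filter _ hI))
  exact hfree d hdm z (mem_filter.1 hz).1 (mem_filter.1 hz).2

theorem two_mul_add_lt_of_lt_card (hΔ : ∀ z ∈ Icc 1 N, Δ z ∈ Icc 1 3)
    (hn : ¬ HasGoodPair m Δ (Icc 1 N)) (hx : IsMonoMSet m Δ (Icc 1 N) x) (hm : 1 ≤ m)
    (hN : x m + 4 * m ≤ N + 2) {γ : ℕ} (hγ : γ ∈ Icc 1 3)
    (hlight : ∀ c ∈ Icc 1 3, c ≠ γ → #{z ∈ Ioc (x m) N | Δ z = c} < m) :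
    2 * N + x 1 + 6 < 6 * m + 3 * x m := by
  set p := x m
  set Γ := {z ∈ Ioc p N | Δ z = γ}
  have hΔp : ∀ z ∈ Ioc p N, Δ z ∈ Icc 1 3 := fun z hz => hΔ z (Ioc_subset_Icc_one _ _ hz)
  have hΓ : 2 * m ≤ #Γ := by
    have : #(Ioc p N) ≤ #Γ + (#(Icc 1 3) - 1) * (m - 1) :=
      card_le_card_fiber_add_mul hγ hΔp fun c hc hne => Nat.le_sub_one_of_lt (hlight c hc hne)
    simp only [Nat.card_Ioc, Nat.card_Icc] at this
    omega
  have hΓγ : ∀ z ∈ Γ, Δ z = γ := fun z hz => (mem_filter.1 hz).2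
  have hΓS : Γ ⊆ Icc 1 N := (filter_subset _ _).trans (Ioc_subset_Icc_one _ _)
  obtain ⟨a, haΓ, t, htΓ, q, hqΓ, hq, htm, htq, hqa⟩ :=
    exists_add_lt_two_mul_of_not_hasGoodPair hn hm hΓS hΓγ hΓ
  have hpa := mem_Ioc.1 (mem_filter.1 haΓ).1
  have hpt := mem_Ioc.1 (mem_filter.1 htΓ).1
  have hqx : q + x 1 < 2 * p :=
    add_lt_of_le_card hn hx hm ((by omega : m ≤ 2 * m).trans hΓ) (mem_filter.1 hqΓ).1
      (hΓγ q hqΓ)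
  set J := Ioo p t ∪ Ioc q N
  have hJ : J ⊆ Ioc p N := fun z hz => by
    simp only [J, mem_union, mem_Ioo, mem_Ioc] at hz ⊢
    omega
  have hJγ : #{z ∈ J | Δ z = γ} ≤ #{z ∈ Γ | z < t} := card_le_card fun z hz => by
    obtain ⟨hzJ, hzγ⟩ := mem_filter.1 hz
    have hzΓ : z ∈ Γ := mem_filter.2 ⟨hJ hzJ, hzγ⟩
    have := hq z hzΓ
    simp only [J, mem_union, mem_Ioo, mem_Ioc] at hzJ
    exact mem_filter.2 ⟨hzΓ, by omega⟩
  have hJcard : #J ≤ #{z ∈ J | Δ z = γ} + (#(Icc 1 3) - 1) * (m - 1) :=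
    card_le_card_fiber_add_mul hγ (fun z hz => hΔp z (hJ hz)) fun c hc hne =>
      (card_le_card (filter_subset_filter _ hJ)).trans (Nat.le_sub_one_of_lt (hlight c hc hne))
  have hdisj : Disjoint (Ioo p t) (Ioc q N) := disjoint_left.2 fun z h1 h2 => by
    simp only [mem_Ioo, mem_Ioc] at h1 h2
    omega
  rw [card_union_of_disjoint hdisj, Nat.card_Ioo, Nat.card_Ioc, Nat.card_Icc] at hJcard
  omega

end ThreeColors

theorem stmt10 (m : ℕ) (hm : 4 ≤ m) (Δ : ℕ → ℕ)
    (hΔ : ∀ z ∈ Finset.Icc 1 (7 * m + (m + 1) / 2 - 6), Δ z ∈ Finset.Icc 1 3) :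
    HasGoodPair m Δ (Finset.Icc 1 (7 * m + (m + 1) / 2 - 6)) := by
  set N := 7 * m + (m + 1) / 2 - 6 with hN
  by_contra hn
  obtain ⟨x, hx⟩ : ∃ x, IsMonoMSet m Δ (Icc 1 (3 * m - 2)) x :=
    exists_isMonoMSet_of_mul_lt_card (by omega)
      (fun z hz => hΔ z (Icc_subset_Icc_right (by omega) hz)) (by simp only [Nat.card_Icc]; omega)
  have hx1 := mem_Icc.1 (hx.2.1 1 le_rfl (by omega))
  have hxm := mem_Icc.1 (hx.2.1 m (by omega) le_rfl)
  replace hx := hx.mono (Icc_subset_Icc_right (by omega : 3 * m - 2 ≤ N))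
  obtain ⟨γ, hγ, hγm⟩ := exists_lt_card_fiber_of_mul_lt_card_of_maps_to
    (s := Ioc (x m) N) (n := m - 1)
    (fun z hz => hΔ z (Ioc_subset_Icc_one _ _ hz))
    (by simp only [Nat.card_Icc, Nat.card_Ioc]; omega)
  have hlight (c) (hc : c ∈ Icc 1 3) (hne : c ≠ γ) : #{z ∈ Ioc (x m) N | Δ z = c} < m :=
    not_le.1 fun hcm =>
      hne (eq_of_le_card_of_le_card hΔ hn hx (by omega) (by omega) hγ hc (by omega) hcm).symm
  have := two_mul_add_lt_of_lt_card hΔ hn hx (by omega) (by omega) hγ hlight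
  omega
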